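/- arXiv:1002.1400 — 7 statements merged into one kernel-verified Lean document; each statement's English description precedes it below -/
import Mathlib

section
/- Let n and s be positive integers, and let r = ⌈n/(s+1)⌉. Then for all integers k with s+1 ≤ k ≤ s+r-1, we have C(n+k-r-1, k) ≥ ∑_{t=1}^{r} C(r-t, k-s) C(n-t+s-1, s-1). -/
/-!
Write `k = s + j` and `N = n + k - r - 1`. Vandermonde's identity, the trinomial revision
`C(σ+j, j) C(σ, d) = C(d+j, j) C(σ+j, d+j)` and the hockey-stick identity turn the left-hand side
into `F_j(N) = ∑_{d<s} C(d+j, j) C(r, d+j+1) C(N, s-1-d)`. Since `r (s+1) ≤ n + s`, we have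
`r s + j ≤ N + 1`, and under this condition `F_j(N) ≤ C(N, s+j)` by induction on `j`.
For `j = 1`, `F_1(N) + C(N+r, s+1) = r C(N+r-1, s) + C(N, s+1)`, and `r C(N+r-1, s) ≤ C(N+r, s+1)`
because `r (s+1) ≤ N + r`. For the step, `(s+j+1) F_{j+1}(N) ≤ (N-s-j) F_j(N)` term by term, while
`(s+j+1) C(N, s+j+1) = (N-s-j) C(N, s+j)`.
-/

open Finset

lemma add_choose_mul_choose (σ j d : ℕ) :
    (σ + j).choose j * σ.choose d = (d + j).choose j * (σ + j).choose (d + j) := by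
  have h := Nat.choose_mul (n := σ + j) (k := d + j) (Nat.le_add_left j d)
  simp only [Nat.add_sub_cancel] at h
  rw [← h, mul_comm]

lemma sum_range_add_choose_add (m j d : ℕ) :
    ∑ σ ∈ range m, (σ + j).choose (d + j) = (m + j).choose (d + j + 1) := by
  induction m with
  | zero => simp [Nat.choose_eq_zero_of_lt]
  | succ m ih =>
    rw [sum_range_succ, ih, Nat.add_right_comm m 1 j, Nat.choose_succ_succ', add_comm]

lemma sum_range_add_choose_mul_add_choose (m j N s : ℕ) :
    ∑ σ ∈ range m, (σ + j).choose j * (N + σ).choose s =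
      ∑ d ∈ range (s + 1), (d + j).choose j * (m + j).choose (d + j + 1) * N.choose (s - d) := by
  calc ∑ σ ∈ range m, (σ + j).choose j * (N + σ).choose s
      = ∑ σ ∈ range m, ∑ d ∈ range (s + 1),
          (d + j).choose j * (σ + j).choose (d + j) * N.choose (s - d) := by
        refine sum_congr rfl fun σ _ => ?_
        rw [add_comm N, Nat.add_choose_eq σ N s, Nat.sum_antidiagonal_eq_sum_range_succ_mk, mul_sum]
        refine sum_congr rfl fun d _ => ?_
        rw [← mul_assoc, add_choose_mul_choose]
    _ = _ := by
        rw [sum_comm]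
        refine sum_congr rfl fun d _ => ?_
        rw [← sum_mul, ← mul_sum, sum_range_add_choose_add]

lemma sum_Icc_choose_sub_mul (r j : ℕ) (g : ℕ → ℕ) :
    ∑ t ∈ Icc 1 r, (r - t).choose j * g t =
      ∑ σ ∈ range (r - j), (σ + j).choose j * g (r - j - σ) := by
  rw [← sum_subset (Icc_subset_Icc_right (Nat.sub_le r j))]
  · refine sum_nbij' (fun t => r - j - t) (fun σ => r - j - σ) ?_ ?_ ?_ ?_ ?_ <;>
      intro x hx <;> simp only [mem_Icc, mem_range] at hx ⊢
    · omega
    · omega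
    · omega
    · omega
    · congr 2 <;> omega
  · intro t ht hnot
    simp only [mem_Icc, not_and_or, not_le] at ht hnot
    rw [Nat.choose_eq_zero_of_lt (by omega), zero_mul]

def tripleChooseSum (r s j N : ℕ) : ℕ :=
  ∑ d ∈ range s, (d + j).choose j * r.choose (d + j + 1) * N.choose (s - 1 - d)

lemma sum_range_choose_succ_mul_choose_add (a N s : ℕ) :
    ∑ d ∈ range s, a.choose (d + 1) * N.choose (s - 1 - d) + N.choose s = (a + N).choose s := by
  rw [Nat.add_choose_eq, Nat.sum_antidiagonal_eq_sum_range_succ_mk, sum_range_succ']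
  simp only [Nat.choose_zero_right, one_mul, Nat.sub_zero]
  congr 1
  refine sum_congr rfl fun d _ => ?_
  rw [Nat.sub_sub, add_comm 1 d]

lemma tripleChooseSum_one_add_choose (r s N : ℕ) :
    tripleChooseSum (r + 1) s 1 N + (r + 1 + N).choose (s + 1) =
      (r + 1) * (r + N).choose s + N.choose (s + 1) := by
  have hX := sum_range_choose_succ_mul_choose_add (r + 1) N (s + 1)
  rw [sum_range_succ'] at hX
  have hY := sum_range_choose_succ_mul_choose_add r N s
  have hterm : ∀ d ∈ range s, (d + 1).choose 1 * (r + 1).choose (d + 1 + 1) * N.choose (s - 1 - d)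
      + (r + 1).choose (d + 1 + 1) * N.choose (s - (d + 1)) =
      (r + 1) * (r.choose (d + 1) * N.choose (s - 1 - d)) := by
    intro d _
    have h := Nat.add_one_mul_choose_eq r (d + 1)
    rw [Nat.choose_one_right, show s - (d + 1) = s - 1 - d by omega]
    calc _ = N.choose (s - 1 - d) * ((r + 1).choose (d + 1 + 1) * (d + 1 + 1)) := by ring
      _ = _ := by rw [← h]; ring
  have hsum := sum_congr rfl hterm
  rw [sum_add_distrib, ← mul_sum] at hsum
  simp only [Nat.add_sub_cancel, Nat.sub_zero, zero_add, Nat.choose_one_right] at hX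
  rw [tripleChooseSum, ← hX, ← hY, mul_add, ← hsum]
  ring

lemma mul_choose_le_choose_succ {r m s : ℕ} (h : r * (s + 1) ≤ m + 1) :
    r * m.choose s ≤ (m + 1).choose (s + 1) := by
  refine Nat.le_of_mul_le_mul_right ?_ s.succ_pos
  rw [← Nat.add_one_mul_choose_eq, mul_right_comm]
  exact Nat.mul_le_mul_right _ h

lemma tripleChooseSum_one_le {r s N : ℕ} (h : r * s ≤ N) :
    tripleChooseSum r s 1 N ≤ N.choose (s + 1) := by
  obtain _ | r := r
  · simp [tripleChooseSum]
  have key := tripleChooseSum_one_add_choose r s N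
  have := mul_choose_le_choose_succ (r := r + 1) (m := r + N) (s := s) (by nlinarith)
  rw [add_right_comm] at this
  omega

lemma succ_mul_choose_mul_choose_le {r s j N d : ℕ} (hd : d < s) (hN : r * s + j ≤ N) :
    (s + j + 1) * ((d + j + 1).choose (j + 1) * r.choose (d + j + 2)) ≤
      (N - (s + j)) * ((d + j).choose j * r.choose (d + j + 1)) := by
  obtain hr | ⟨x, rfl⟩ : r < d + j + 2 ∨ ∃ x, r = d + j + 2 + x :=
    (lt_or_ge r (d + j + 2)).imp_right Nat.exists_eq_add_of_le
  · simp [Nat.choose_eq_zero_of_lt hr]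
  have hj : (j + 1) * (d + j + 1).choose (j + 1) = (d + j + 1) * (d + j).choose j := by
    rw [mul_comm, ← Nat.add_one_mul_choose_eq]
  have hr : (d + j + 2) * (d + j + 2 + x).choose (d + j + 2) =
      (x + 1) * (d + j + 2 + x).choose (d + j + 1) := by
    rw [mul_comm, Nat.choose_succ_right_eq, mul_comm]
    congr 1; omega
  have hscalar : (s + j + 1) * (d + j + 1) ≤ s * (j + 1) * (d + j + 2) := by
    obtain ⟨e, rfl⟩ := Nat.exists_eq_add_of_lt hd
    calc _ ≤ (d + e + 1 + j + 1) * (d + j + 1) + ((d + e) * j * (d + j + 2) + e) :=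
          Nat.le_add_right _ _
      _ = _ := by ring
  have hN' : s * (d + j + 1 + x) ≤ N - (s + j) := by
    have : (d + j + 2 + x) * s = s * (d + j + 1 + x) + s := by ring
    omega
  refine Nat.le_of_mul_le_mul_left ?_ (by positivity : 0 < (j + 1) * (d + j + 2))
  set P := (d + j).choose j * (d + j + 2 + x).choose (d + j + 1)
  calc (j + 1) * (d + j + 2) * ((s + j + 1) * ((d + j + 1).choose (j + 1) *
          (d + j + 2 + x).choose (d + j + 2)))
      = (s + j + 1) * ((j + 1) * (d + j + 1).choose (j + 1)) *
          ((d + j + 2) * (d + j + 2 + x).choose (d + j + 2)) := by ring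
    _ = (s + j + 1) * (d + j + 1) * (x + 1) * P := by rw [hj, hr]; ring
    _ ≤ s * (j + 1) * (d + j + 2) * (d + j + 1 + x) * P :=
        Nat.mul_le_mul_right _ (Nat.mul_le_mul hscalar (by omega))
    _ = (j + 1) * (d + j + 2) * (s * (d + j + 1 + x) * P) := by ring
    _ ≤ (j + 1) * (d + j + 2) * ((N - (s + j)) * P) :=
        Nat.mul_le_mul_left _ (Nat.mul_le_mul_right _ hN')

lemma succ_mul_tripleChooseSum_succ_le {r s j N : ℕ} (hN : r * s + j ≤ N) :
    (s + j + 1) * tripleChooseSum r s (j + 1) N ≤ (N - (s + j)) * tripleChooseSum r s j N := by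
  simp only [tripleChooseSum, mul_sum]
  refine sum_le_sum fun d hd => ?_
  have h := succ_mul_choose_mul_choose_le (mem_range.mp hd) hN
  calc _ = (s + j + 1) * ((d + j + 1).choose (j + 1) * r.choose (d + j + 2)) *
          N.choose (s - 1 - d) := by rw [← add_assoc]; ring
    _ ≤ (N - (s + j)) * ((d + j).choose j * r.choose (d + j + 1)) * N.choose (s - 1 - d) :=
        Nat.mul_le_mul_right _ h
    _ = _ := by ring

theorem tripleChooseSum_le {r s j N : ℕ} (hj : 1 ≤ j) (hN : r * s + j ≤ N + 1) :
    tripleChooseSum r s j N ≤ N.choose (s + j) := by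
  induction j, hj using Nat.le_induction generalizing N with
  | base => exact tripleChooseSum_one_le (by omega)
  | succ j hj ih =>
    refine Nat.le_of_mul_le_mul_left ?_ (s + j).succ_pos
    calc (s + j + 1) * tripleChooseSum r s (j + 1) N
        ≤ (N - (s + j)) * tripleChooseSum r s j N := succ_mul_tripleChooseSum_succ_le (by omega)
      _ ≤ (N - (s + j)) * N.choose (s + j) := Nat.mul_le_mul_left _ (ih (by omega))
      _ = (s + j + 1) * N.choose (s + (j + 1)) := by
        rw [← add_assoc, mul_comm, ← Nat.choose_succ_right_eq, mul_comm]

theorem stmt_3_general (n s : ℕ) (hs : 0 < s) (r : ℕ) (hr : r = (n + s) / (s + 1))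
    (k : ℕ) (hk1 : s + 1 ≤ k) (hk2 : k ≤ s + r - 1) :
    ∑ t ∈ Finset.Icc 1 r, (r - t).choose (k - s) * (n + s - 1 - t).choose (s - 1) ≤
      (n + k - r - 1).choose k := by
  obtain ⟨j, rfl⟩ : ∃ j, k = s + j := Nat.exists_eq_add_of_le (by omega)
  obtain ⟨s, rfl⟩ : ∃ s', s = s' + 1 := Nat.exists_eq_add_of_le' hs
  have hrs : r * (s + 1) + r ≤ n + (s + 1) := by
    rw [← Nat.mul_succ, hr]
    exact Nat.div_mul_le_self _ _
  rw [Nat.add_sub_cancel_left, sum_Icc_choose_sub_mul]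
  calc ∑ σ ∈ range (r - j), (σ + j).choose j * (n + (s + 1) - 1 - (r - j - σ)).choose (s + 1 - 1)
      = ∑ σ ∈ range (r - j), (σ + j).choose j * (n + (s + 1 + j) - r - 1 + σ).choose s := by
        refine sum_congr rfl fun σ hσ => ?_
        rw [mem_range] at hσ
        congr 2; omega
    _ = tripleChooseSum r (s + 1) j (n + (s + 1 + j) - r - 1) := by
        rw [sum_range_add_choose_mul_add_choose, tripleChooseSum, Nat.sub_add_cancel (by omega),
          Nat.add_sub_cancel]
    _ ≤ (n + (s + 1 + j) - r - 1).choose (s + 1 + j) := tripleChooseSum_le (by omega) (by omega)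

theorem stmt_3 (n s : ℕ) (hn : 0 < n) (hs : 0 < s) (r : ℕ) (hr : r = (n + s) / (s + 1))
    (k : ℕ) (hk1 : s + 1 ≤ k) (hk2 : k ≤ s + r - 1) :
    ∑ t ∈ Finset.Icc 1 r, (r - t).choose (k - s) * (n + s - 1 - t).choose (s - 1) ≤
      (n + k - r - 1).choose k :=
  stmt_3_general n s hs r hr k hk1 hk2
end

section
/- For positive integers n and s, the largest integer p such that the power series (1-T)^p · H(T) has all nonnegative coefficients, where H(T) = ∑_{k≥s} C(n+k-1, k) T^k, equals ⌈n/(s+1)⌉. -/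
/-!
Write `H_n` for the series in `n` variables and `q = ⌈n/(s+1)⌉`, the largest `q` with
`q (s+1) ≤ n + s`. The coefficient of `T^(s+1)` in `(1-T)^p H_n` is
`C(n+s, s+1) - p C(n+s-1, s)`, and `(n+s) C(n+s-1, s) = (s+1) C(n+s, s+1)`, so it is nonnegative
only if `p (s+1) ≤ n + s`, i.e. `p ≤ q`.

For the converse put `n = W + q`, so that `W ≥ (q-1) s`. Since
`(1-T) H_(m+1) = C(m+s-1, s-1) T^s + H_m`, we get
`(1-T)^q H_(W+q) = ∑_(t<q) C(W+t+s-1, s-1) T^s (1-T)^t + H_W`, whose coefficient of `T^(s+r)` is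
`C(W+s-1+r, s+r) + (-1)^r ∑_(t<q) C(t, r) C(W+t+s-1, s-1)`. The sum is at most the first term.
Pascal's rule on both sides reduces this, by induction on `s` and `W`, to the extremal case
`W = (q-1) s`. There `(q-1) C(t, r) ≤ t C(q-1, r)` for `t < q` and the closed form
`∑_(t<q) t C(qs-1+t, s-1) = C(qs, s+1)` leave `C(q-1, r) C(qs, s+1) ≤ (q-1) C(qs+r-1, s+r)`,
which follows by induction on `r` once `s ≥ 2`; the case `s = 1` is a hockey-stick sum.
-/

open PowerSeries Finset

namespace Nat

theorem choose_add_sum_range_add_choose (b k m : ℕ) :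
    b.choose (k + 1) + ∑ t ∈ range m, (b + t).choose k = (b + m).choose (k + 1) := by
  induction m with
  | zero => simp
  | succ m ih =>
    rw [sum_range_succ, ← add_assoc, ih, ← add_assoc, choose_succ_succ' (b + m), add_comm]

theorem sum_range_mul_choose_add {b q s : ℕ} (hb : b + 1 = q * (s + 1)) :
    ∑ t ∈ range q, t * (b + t).choose s = (b + 1).choose (s + 2) := by
  -- `(b + 1 + t) C(b+t, s) = (s + 1) C(b+1+t, s+1)`; both sums are then hockey-stick sums, and
  -- `b + 1 = q (s + 1)` makes their top terms cancel.
  have hsum : ∑ t ∈ range q, t * (b + t).choose s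
      + (b + 1) * ∑ t ∈ range q, (b + t).choose s
      = (s + 1) * ∑ t ∈ range q, (b + 1 + t).choose (s + 1) := by
    rw [mul_sum, mul_sum, ← sum_add_distrib]
    refine sum_congr rfl fun t _ => ?_
    rw [← add_mul, add_comm t, add_right_comm, add_one_mul_choose_eq, mul_comm]
  have hS₀ := choose_add_sum_range_add_choose b s q
  have hS₁ := choose_add_sum_range_add_choose (b + 1) (s + 1) q
  have hb₀ := add_one_mul_choose_eq b (s + 1)
  have hq : (b + 1 + q) = q * (s + 2) := by rw [hb]; ring
  have hqC : q * (b + q).choose (s + 1) = (b + 1 + q).choose (s + 2) := by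
    have h : (b + 1 + q) * (b + q).choose (s + 1) = (b + 1 + q).choose (s + 2) * (s + 2) := by
      rw [add_right_comm]; exact add_one_mul_choose_eq (b + q) (s + 1)
    nth_rw 1 [hq] at h
    rw [mul_right_comm] at h
    exact Nat.eq_of_mul_eq_mul_right (by omega) h
  zify at hsum hS₀ hS₁ hb₀ hqC hb ⊢
  linear_combination hsum - ((b : ℤ) + 1) * hS₀ + ((s : ℤ) + 1) * hS₁ + hb₀
    - ((s : ℤ) + 1) * hqC - (((b + q).choose (s + 1) : ℕ) : ℤ) * hb

theorem mul_choose_le_mul_choose {Q r t : ℕ} (hr : r ≠ 0) (ht : t ≤ Q) :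
    Q * t.choose r ≤ t * Q.choose r := by
  obtain ⟨r, rfl⟩ := exists_eq_succ_of_ne_zero hr
  rcases t with _ | t
  · simp
  obtain ⟨Q, rfl⟩ : ∃ Q', Q = Q' + 1 := ⟨Q - 1, by omega⟩
  refine Nat.le_of_mul_le_mul_right ?_ r.succ_pos
  calc (Q + 1) * (t + 1).choose (r + 1) * (r + 1)
      = (Q + 1) * ((t + 1) * t.choose r) := by rw [add_one_mul_choose_eq]; ring
    _ ≤ (Q + 1) * ((t + 1) * Q.choose r) := by gcongr; omega
    _ = (t + 1) * ((Q + 1) * Q.choose r) := by ring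
    _ = (t + 1) * (Q + 1).choose (r + 1) * (r + 1) := by rw [add_one_mul_choose_eq]; ring

theorem choose_mul_choose_le {Q s : ℕ} (hs : 2 ≤ s) (r : ℕ) :
    Q.choose (r + 1) * ((Q + 1) * s).choose (s + 1)
      ≤ Q * ((Q + 1) * s + r).choose (s + r + 1) := by
  induction r with
  | zero => simp
  | succ r ih =>
    rcases le_or_gt Q (r + 1) with hQ | hQ
    · simp [choose_eq_zero_of_lt (show Q < r + 1 + 1 by omega)]
    have hratio : (Q - (r + 1)) * (s + r + 2) ≤ (r + 2) * ((Q + 1) * s + r + 1) := by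
      clear ih
      obtain ⟨a, rfl⟩ : ∃ a, Q = a + r + 2 := ⟨Q - r - 2, by omega⟩
      obtain ⟨s, rfl⟩ : ∃ s', s = s' + 2 := ⟨s - 2, by omega⟩
      rw [show a + r + 2 - (r + 1) = a + 1 by omega]
      calc (a + 1) * (s + 2 + r + 2) ≤ (a + r + 3) * ((r + 2) * (s + 2)) :=
            Nat.mul_le_mul (by omega) (by nlinarith)
        _ ≤ (r + 2) * ((a + r + 2 + 1) * (s + 2) + r + 1) := by nlinarith
    have hQ := choose_succ_right_eq Q (r + 1)
    have hN := add_one_mul_choose_eq ((Q + 1) * s + r) (s + r + 1)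
    rw [show (Q + 1) * s + (r + 1) = (Q + 1) * s + r + 1 by ring,
      show s + (r + 1) + 1 = s + r + 1 + 1 by ring]
    refine Nat.le_of_mul_le_mul_right (c := (r + 2) * (s + r + 2)) ?_ (by positivity)
    calc Q.choose (r + 1 + 1) * ((Q + 1) * s).choose (s + 1) * ((r + 2) * (s + r + 2))
        = Q.choose (r + 1 + 1) * (r + 1 + 1) * ((Q + 1) * s).choose (s + 1) * (s + r + 2) := by
          ring
      _ = Q.choose (r + 1) * ((Q + 1) * s).choose (s + 1) * ((Q - (r + 1)) * (s + r + 2)) := by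
          rw [hQ]; ring
      _ ≤ Q * ((Q + 1) * s + r).choose (s + r + 1) * ((r + 2) * ((Q + 1) * s + r + 1)) := by
          gcongr
      _ = Q * (r + 2) * (((Q + 1) * s + r + 1) * ((Q + 1) * s + r).choose (s + r + 1)) := by
          ring
      _ = Q * ((Q + 1) * s + r + 1).choose (s + r + 1 + 1) * ((r + 2) * (s + r + 2)) := by
          rw [hN]; ring

theorem sum_range_choose_mul_choose_le_of_eq {q r s : ℕ} (hr : r ≠ 0) :
    ∑ t ∈ range q, t.choose r * ((q - 1) * (s + 2) + t + (s + 1)).choose (s + 1)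
      ≤ ((q - 1) * (s + 2) + (s + 1) + r).choose (s + 2 + r) := by
  obtain ⟨r, rfl⟩ := exists_eq_succ_of_ne_zero hr
  rcases q with _ | _ | Q
  · simp
  · simp
  set b := (Q + 1) * (s + 2) + s + 1
  have hb : b + 1 = (Q + 2) * (s + 2) := by ring
  have hshift : ∀ t, (Q + 2 - 1) * (s + 2) + t + (s + 1) = b + t := fun t => by
    rw [show Q + 2 - 1 = Q + 1 by omega]; ring
  have hrhs : (Q + 2 - 1) * (s + 2) + (s + 1) + (r + 1) = (Q + 2) * (s + 2) + r := by
    rw [show Q + 2 - 1 = Q + 1 by omega]; ring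
  simp_rw [hshift, hrhs]
  refine Nat.le_of_mul_le_mul_left ?_ Q.succ_pos
  calc (Q + 1) * ∑ t ∈ range (Q + 2), t.choose (r + 1) * (b + t).choose (s + 1)
      ≤ ∑ t ∈ range (Q + 2), t * (Q + 1).choose (r + 1) * (b + t).choose (s + 1) := by
        rw [mul_sum]
        refine sum_le_sum fun t ht => ?_
        rw [← mul_assoc]
        exact Nat.mul_le_mul_right _
          (mul_choose_le_mul_choose r.succ_ne_zero (by rw [mem_range] at ht; omega))
    _ = (Q + 1).choose (r + 1) * ((Q + 2) * (s + 2)).choose (s + 2 + 1) := by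
        rw [← hb, ← sum_range_mul_choose_add hb, mul_sum]
        exact sum_congr rfl fun t _ => by ring
    _ ≤ (Q + 1) * ((Q + 2) * (s + 2) + r).choose (s + 2 + (r + 1)) := by
        rw [← add_assoc]
        exact choose_mul_choose_le (by omega) r

theorem sum_range_choose_mul_choose_le {q r s W : ℕ} (hr : r ≠ 0)
    (hW : (q - 1) * (s + 1) ≤ W) :
    ∑ t ∈ range q, t.choose r * (W + t + s).choose s ≤ (W + s + r).choose (s + 1 + r) := by
  induction s generalizing W with
  | zero =>
    have hq := choose_add_sum_range_add_choose 0 r q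
    simp only [zero_add, choose_eq_zero_of_lt (show 0 < r + 1 by omega)] at hq
    simp only [add_zero, choose_zero_right, mul_one, hq, zero_add] at hW ⊢
    rw [add_comm 1 r]
    exact choose_le_choose _ (by omega)
  | succ s ih =>
    induction W, hW using Nat.le_induction with
    | base => exact sum_range_choose_mul_choose_le_of_eq hr
    | succ W hW ihW =>
      have hpascal : ∀ t, (W + 1 + t + (s + 1)).choose (s + 1)
          = (W + 1 + t + s).choose s + (W + t + (s + 1)).choose (s + 1) := fun t => by
        rw [show W + 1 + t + (s + 1) = W + t + (s + 1) + 1 by omega, choose_succ_succ',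
          show W + 1 + t + s = W + t + (s + 1) by omega]
      have hW' : (q - 1) * (s + 1) ≤ W + 1 :=
        le_trans (Nat.mul_le_mul_left _ (s + 1).le_succ) (hW.trans W.le_succ)
      simp_rw [hpascal, mul_add, sum_add_distrib]
      calc _ ≤ (W + 1 + s + r).choose (s + 1 + r) + (W + (s + 1) + r).choose (s + 1 + 1 + r) :=
            add_le_add (ih hW') ihW
        _ = (W + 1 + (s + 1) + r).choose (s + 1 + 1 + r) := by
            rw [show W + 1 + (s + 1) + r = W + (s + 1) + r + 1 by omega,
              show s + 1 + 1 + r = s + 1 + r + 1 by omega, choose_succ_succ',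
              show W + 1 + s + r = W + (s + 1) + r by omega]

end Nat

namespace PowerSeries

theorem coeff_one_sub_X_pow {R : Type*} [CommRing R] (t r : ℕ) :
    coeff r ((1 - X : R⟦X⟧) ^ t) = (-1) ^ r * t.choose r := by
  induction t generalizing r with
  | zero => cases r <;> simp [coeff_one]
  | succ t ih =>
    rw [pow_succ, mul_sub, mul_one, map_sub]
    cases r with
    | zero => simp [ih]
    | succ r =>
      rw [coeff_succ_mul_X, ih, ih, Nat.choose_succ_succ]
      push_cast
      ring

noncomputable def hilbertSeriesPowMaxIdeal (n s : ℕ) : ℤ⟦X⟧ :=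
  mk fun j => if s ≤ j then ((n + j - 1).choose j : ℤ) else 0

local notation "H" => hilbertSeriesPowMaxIdeal

theorem coeff_mul_hilbertSeriesPowMaxIdeal_of_lt (f : ℤ⟦X⟧) {n s k : ℕ} (hk : k < s) :
    coeff k (f * H n s) = 0 := by
  rw [coeff_mul]
  refine sum_eq_zero fun ij hij => ?_
  rw [HasAntidiagonal.mem_antidiagonal] at hij
  simp [hilbertSeriesPowMaxIdeal, show ¬ s ≤ ij.2 by omega]

theorem one_sub_X_mul_hilbertSeriesPowMaxIdeal_succ (m s : ℕ) :
    (1 - X) * H (m + 1) (s + 1) = C ((m + s).choose s : ℤ) * X ^ (s + 1) + H m (s + 1) := by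
  rw [sub_mul, one_mul, sub_eq_iff_eq_add]
  ext (_ | k)
  · simp [hilbertSeriesPowMaxIdeal]
  · rw [map_add, map_add, coeff_succ_X_mul, coeff_C_mul_X_pow]
    simp only [hilbertSeriesPowMaxIdeal, coeff_mk, add_right_comm m 1, add_tsub_cancel_right,
      ← add_assoc, Nat.choose_succ_succ', Nat.cast_add, Nat.add_right_cancel_iff]
    split_ifs <;> subst_vars <;> omega

theorem one_sub_X_pow_mul_hilbertSeriesPowMaxIdeal_add (s q W : ℕ) :
    (1 - X) ^ q * H (W + q) (s + 1)
      = ∑ t ∈ range q, C ((W + t + s).choose s : ℤ) * X ^ (s + 1) * (1 - X) ^ t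
        + H W (s + 1) := by
  induction q generalizing W with
  | zero => simp
  | succ q ih =>
    rw [← add_assoc, add_right_comm, pow_succ', mul_assoc, ih, mul_add,
      one_sub_X_mul_hilbertSeriesPowMaxIdeal_succ, mul_sum, sum_range_succ', ← add_assoc]
    congr 2
    · refine sum_congr rfl fun t _ => ?_
      rw [add_right_comm W 1 t, add_assoc W t 1]
      ring
    · simp

theorem coeff_one_sub_X_pow_mul_hilbertSeriesPowMaxIdeal_add (s q W r : ℕ) :
    coeff (s + 1 + r) ((1 - X) ^ q * H (W + q) (s + 1))
      = (-1) ^ r * ((∑ t ∈ range q, t.choose r * (W + t + s).choose s : ℕ) : ℤ)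
        + (W + s + r).choose (s + 1 + r) := by
  rw [one_sub_X_pow_mul_hilbertSeriesPowMaxIdeal_add, map_add, map_sum, Nat.cast_sum, mul_sum]
  congr 1
  · refine sum_congr rfl fun t _ => ?_
    rw [mul_assoc, coeff_C_mul, add_comm (s + 1) r, coeff_X_pow_mul, coeff_one_sub_X_pow]
    push_cast
    ring
  · rw [hilbertSeriesPowMaxIdeal, coeff_mk, if_pos (by omega),
      show W + (s + 1 + r) - 1 = W + s + r by omega]

theorem coeff_one_sub_X_pow_mul_hilbertSeriesPowMaxIdeal_nonneg {n q s : ℕ}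
    (h : q * (s + 2) ≤ n + s + 1) (k : ℕ) :
    0 ≤ coeff k ((1 - X) ^ q * H n (s + 1)) := by
  obtain ⟨W, rfl, hW⟩ : ∃ W, n = W + q ∧ (q - 1) * (s + 1) ≤ W := by
    rcases q with _ | q
    · exact ⟨n, rfl, by simp⟩
    · have h' : q * (s + 1) + (q + 1) ≤ n := by nlinarith
      exact ⟨n - (q + 1), by omega, by rw [Nat.add_sub_cancel]; omega⟩
  rcases lt_or_ge k (s + 1) with hk | hk
  · rw [coeff_mul_hilbertSeriesPowMaxIdeal_of_lt _ hk]
  obtain ⟨r, rfl⟩ := Nat.exists_eq_add_of_le hk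
  rw [coeff_one_sub_X_pow_mul_hilbertSeriesPowMaxIdeal_add]
  rcases neg_one_pow_eq_or ℤ r with hr | hr
  · rw [hr]
    positivity
  · have hr0 : r ≠ 0 := by
      rintro rfl
      norm_num at hr
    have := Int.ofNat_le.mpr (Nat.sum_range_choose_mul_choose_le hr0 hW)
    rw [hr]
    linarith

theorem coeff_add_two_one_sub_X_pow_mul_hilbertSeriesPowMaxIdeal (n s p : ℕ) :
    coeff (s + 2) ((1 - X) ^ p * H n (s + 1))
      = ((n + s + 1).choose (s + 2) : ℤ) - p * ((n + s).choose (s + 1) : ℤ) := by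
  rw [coeff_mul, Nat.sum_antidiagonal_eq_sum_range_succ (fun i j => coeff i _ * coeff j _),
    sum_range_succ', sum_range_succ', sum_eq_zero fun k _ => ?_]
  · simp only [zero_add, Nat.sub_zero, show s + 2 - 1 = s + 1 by omega, coeff_one_sub_X_pow,
      hilbertSeriesPowMaxIdeal, coeff_mk, if_pos (le_refl (s + 1)),
      if_pos (Nat.le_succ (s + 1)), show n + (s + 1) - 1 = n + s by omega,
      show n + (s + 2) - 1 = n + s + 1 by omega, pow_one, pow_zero, Nat.choose_one_right,
      Nat.choose_zero_right, Nat.cast_one, mul_one]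
    ring
  · rw [hilbertSeriesPowMaxIdeal, coeff_mk, if_neg (by omega), mul_zero]

theorem mul_le_of_coeff_one_sub_X_pow_mul_hilbertSeriesPowMaxIdeal_nonneg {n s p : ℕ} (hn : 0 < n)
    (h : 0 ≤ coeff (s + 2) ((1 - X) ^ p * H n (s + 1))) : p * (s + 2) ≤ n + s + 1 := by
  rw [coeff_add_two_one_sub_X_pow_mul_hilbertSeriesPowMaxIdeal, sub_nonneg] at h
  have hp : p * (n + s).choose (s + 1) ≤ (n + s + 1).choose (s + 2) := by exact_mod_cast h
  refine Nat.le_of_mul_le_mul_right ?_ (Nat.choose_pos (show s + 1 ≤ n + s by omega))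
  calc p * (s + 2) * (n + s).choose (s + 1) = p * (n + s).choose (s + 1) * (s + 2) := by ring
    _ ≤ (n + s + 1).choose (s + 2) * (s + 2) := Nat.mul_le_mul_right _ hp
    _ = (n + s + 1) * (n + s).choose (s + 1) := (Nat.add_one_mul_choose_eq _ _).symm

end PowerSeries

theorem stmt_4 (n s : ℕ) (hn : 0 < n) (hs : 0 < s) :
    IsGreatest
      {p : ℕ | ∀ k : ℕ, 0 ≤ (PowerSeries.coeff (R := ℤ) k)
        ((1 - PowerSeries.X) ^ p *
          PowerSeries.mk fun j => if s ≤ j then ((n + j - 1).choose j : ℤ) else 0)}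
      ((n + s) / (s + 1)) := by
  obtain ⟨s, rfl⟩ := Nat.exists_eq_add_one_of_ne_zero hs.ne'
  refine ⟨coeff_one_sub_X_pow_mul_hilbertSeriesPowMaxIdeal_nonneg (Nat.div_mul_le_self _ _),
    fun p hp => ?_⟩
  exact (Nat.le_div_iff_mul_le (by omega)).mpr
    (mul_le_of_coeff_one_sub_X_pow_mul_hilbertSeriesPowMaxIdeal_nonneg hn (hp (s + 2)))
end

section
/- For all real numbers n, t ≥ 1, s ≥ 2, and real k with s+2 ≤ k ≤ r+s-t-1 where r = ⌈n/(s+1)⌉, we have ψ(n+k-r) - ψ(k+1) > ψ(r-t-k+s+1) - ψ(k-s+1), where ψ is the digamma function. -/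
/-- The digamma function `ψ = Γ'/Γ`, as the derivative of `log ∘ Γ`. -/
noncomputable def digamma (x : ℝ) : ℝ := deriv (fun y : ℝ => Real.log (Real.Gamma y)) x

/-!
Log-convexity of `Γ` gives `log (x - 1) ≤ ψ x ≤ log x`. Shifting `x` by the recurrence
`ψ (x + 1) = ψ x + 1 / x` and comparing `∑ 1 / (x + j)` with `log` by the midpoint rule sharpens
this, in the limit, to `log (x - 1/2) ≤ ψ x ≤ log (x - 1/2) + 1 / (18 (x - 1) x)`, whence
`ψ (D + s) - ψ D ≤ log s` for `D ≥ 3`, `s ≥ 2`. With `A = n + k - r` and `B = r - t - k + s + 1`,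
the choice of `r` gives `s B < A - 1`, so
`ψ A - ψ B ≥ log (A - 1) - log B > log s ≥ ψ (k + 1) - ψ (k - s + 1)`.
-/

open Real Filter Topology Finset

lemma differentiableAt_log_Gamma {x : ℝ} (hx : 0 < x) :
    DifferentiableAt ℝ (fun y => log (Gamma y)) x := by
  have hx' : ∀ m : ℕ, x ≠ -m := fun m => by
    have : (0 : ℝ) ≤ m := m.cast_nonneg
    linarith
  exact (differentiableAt_Gamma hx').log (Gamma_ne_zero hx')

lemma log_Gamma_add_one {x : ℝ} (hx : 0 < x) :
    log (Gamma (x + 1)) = log (Gamma x) + log x := by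
  rw [Gamma_add_one hx.ne', log_mul hx.ne' (Gamma_pos_of_pos hx).ne', add_comm]

lemma digamma_add_one {x : ℝ} (hx : 0 < x) : digamma (x + 1) = digamma x + x⁻¹ := by
  unfold digamma
  rw [← deriv_comp_add_const, ← deriv_log,
    ← deriv_add (differentiableAt_log_Gamma hx) (differentiableAt_log hx.ne')]
  apply EventuallyEq.deriv_eq
  filter_upwards [eventually_gt_nhds hx] with y hy using log_Gamma_add_one hy

lemma digamma_add_nat {x : ℝ} (hx : 0 < x) (N : ℕ) :
    digamma (x + N) = digamma x + ∑ j ∈ range N, (x + j)⁻¹ := by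
  induction N with
  | zero => simp
  | succ N ih =>
    rw [Nat.cast_succ, ← add_assoc, digamma_add_one (by positivity), ih, sum_range_succ, add_assoc]

-- The convex `log ∘ Γ` has slope `log (x - 1)` on `[x - 1, x]` and `log x` on `[x, x + 1]`.
lemma digamma_le_log {x : ℝ} (hx : 0 < x) : digamma x ≤ log x := by
  have h := convexOn_log_Gamma.deriv_le_slope (Set.mem_Ioi.mpr hx)
    (Set.mem_Ioi.mpr (by linarith : (0 : ℝ) < x + 1)) (by linarith)
    (differentiableAt_log_Gamma hx)
  rw [slope_def_field, Function.comp_apply, Function.comp_apply, log_Gamma_add_one hx] at h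
  simpa [digamma, Function.comp_def] using h

lemma log_sub_one_le_digamma {x : ℝ} (hx : 1 < x) : log (x - 1) ≤ digamma x := by
  have hx1 : 0 < x - 1 := by linarith
  have h := convexOn_log_Gamma.slope_le_deriv (Set.mem_Ioi.mpr hx1)
    (Set.mem_Ioi.mpr (by linarith : (0 : ℝ) < x)) (by linarith)
    (differentiableAt_log_Gamma (by linarith))
  rw [slope_def_field, Function.comp_apply, Function.comp_apply,
    show x = (x - 1) + 1 by ring, log_Gamma_add_one hx1] at h
  simpa [digamma, Function.comp_def] using h

lemma two_mul_le_log_one_add_sub_log_one_sub {u : ℝ} (hu0 : 0 ≤ u) (hu1 : u < 1) :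
    2 * u ≤ log (1 + u) - log (1 - u) := by
  have hsum := hasSum_log_sub_log_of_abs_lt_one (abs_lt.mpr ⟨by linarith, hu1⟩)
  simpa using sum_le_hasSum (range 1) (fun k _ => by positivity) hsum

lemma log_one_add_sub_log_one_sub_le {u : ℝ} (hu0 : 0 ≤ u) (hu1 : u < 1) :
    log (1 + u) - log (1 - u) ≤ 2 * u + 2 / 3 * u ^ 3 / (1 - u ^ 2) := by
  have hsum := (hasSum_nat_add_iff' 1).mpr
    (hasSum_log_sub_log_of_abs_lt_one (abs_lt.mpr ⟨by linarith, hu1⟩))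
  have hu2 : u ^ 2 < 1 := by nlinarith
  have hgeom := (hasSum_geometric_of_lt_one (sq_nonneg u) hu2).mul_left (2 / 3 * u ^ 3)
  have := hasSum_le (fun k => ?_) hsum hgeom
  · simp only [range_one, sum_singleton] at this
    norm_num at this
    rw [div_eq_mul_inv]
    linarith
  · rw [show 2 * (k + 1) + 1 = 2 * k + 3 by ring, pow_add, pow_mul, Nat.cast_succ]
    calc 2 * (1 / (2 * ((k : ℝ) + 1) + 1)) * ((u ^ 2) ^ k * u ^ 3)
        ≤ 2 * (1 / 3) * ((u ^ 2) ^ k * u ^ 3) := by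
          gcongr
          linarith [k.cast_nonneg (α := ℝ)]
      _ = 2 / 3 * u ^ 3 * (u ^ 2) ^ k := by ring

lemma log_add_half_sub_log_sub_half {y : ℝ} (hy : 1 / 2 < y) :
    log (y + 1 / 2) - log (y - 1 / 2) = log (1 + (2 * y)⁻¹) - log (1 - (2 * y)⁻¹) := by
  have hy0 : 0 < y := by linarith
  have hu : (2 * y)⁻¹ < 1 := inv_lt_one_of_one_lt₀ (by linarith)
  rw [show y + 1 / 2 = y * (1 + (2 * y)⁻¹) by field_simp,
    show y - 1 / 2 = y * (1 - (2 * y)⁻¹) by field_simp,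
    log_mul hy0.ne' (by positivity), log_mul hy0.ne' (by linarith)]
  ring

lemma inv_le_log_add_half_sub_log_sub_half {y : ℝ} (hy : 1 / 2 < y) :
    y⁻¹ ≤ log (y + 1 / 2) - log (y - 1 / 2) := by
  have hy0 : 0 < y := by linarith
  rw [log_add_half_sub_log_sub_half hy]
  calc y⁻¹ = 2 * (2 * y)⁻¹ := by field_simp
    _ ≤ _ := two_mul_le_log_one_add_sub_log_one_sub (by positivity)
      (inv_lt_one_of_one_lt₀ (by linarith))

lemma log_add_half_sub_log_sub_half_le {y : ℝ} (hy : 1 < y) :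
    log (y + 1 / 2) - log (y - 1 / 2) ≤ y⁻¹ + 1 / (9 * (y - 1) * y * (y + 1)) := by
  rw [log_add_half_sub_log_sub_half (by linarith)]
  refine (log_one_add_sub_log_one_sub_le (by positivity)
    (inv_lt_one_of_one_lt₀ (by linarith))).trans ?_
  have hy0 : 0 < y := by linarith
  rw [show 2 * (2 * y)⁻¹ + 2 / 3 * (2 * y)⁻¹ ^ 3 / (1 - (2 * y)⁻¹ ^ 2)
      = y⁻¹ + 1 / (3 * y * (4 * y ^ 2 - 1)) by field_simp; ring]
  have hpos : 0 < 9 * (y - 1) * y * (y + 1) := by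
    have : 0 < y - 1 := by linarith
    positivity
  have hle : 9 * (y - 1) * y * (y + 1) ≤ 3 * y * (4 * y ^ 2 - 1) := by nlinarith
  exact add_le_add_right (one_div_le_one_div_of_le hpos hle) _

lemma sum_inv_le_log_sub_log {c : ℝ} (hc : 1 / 2 < c) (N : ℕ) :
    ∑ j ∈ range N, (c + j)⁻¹ ≤ log (c + N - 1 / 2) - log (c - 1 / 2) := by
  have htele := sum_range_sub (fun j : ℕ => log (c + j - 1 / 2)) N
  simp only [Nat.cast_zero, add_zero] at htele
  rw [← htele]
  refine sum_le_sum fun j _ => ?_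
  rw [Nat.cast_succ, show c + (j + 1) - 1 / 2 = c + j + 1 / 2 by ring]
  exact inv_le_log_add_half_sub_log_sub_half (by linarith [j.cast_nonneg (α := ℝ)])

-- `1 / (18 (y - 1) y)` telescopes to absorb the midpoint-rule error `1 / (9 (y - 1) y (y + 1))`.
lemma log_sub_log_le_sum_inv {c : ℝ} (hc : 1 < c) (N : ℕ) :
    log (c + N - 1 / 2) - log (c - 1 / 2) ≤
      ∑ j ∈ range N, (c + j)⁻¹ + 1 / (18 * (c - 1) * c) := by
  set g : ℝ → ℝ := fun y => log (y - 1 / 2) + 1 / (18 * (y - 1) * y) with hg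
  have htele := sum_range_sub (fun j : ℕ => g (c + j)) N
  simp only [Nat.cast_zero, add_zero] at htele
  have hterm : ∀ j ∈ range N, g (c + (j + 1 : ℕ)) - g (c + j) ≤ (c + j)⁻¹ := fun j _ => by
    have hy : 1 < c + j := by linarith [j.cast_nonneg (α := ℝ)]
    have hy0 : 0 < c + j := by linarith
    have hy1 : 0 < c + j - 1 := by linarith
    have hcorr : 1 / (18 * (c + j - 1) * (c + j)) - 1 / (18 * (c + j) * (c + j + 1))
        = 1 / (9 * (c + j - 1) * (c + j) * (c + j + 1)) := by
      field_simp
      ring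
    have hlog := log_add_half_sub_log_sub_half_le hy
    simp only [hg]
    push_cast
    rw [show c + (j + 1) - 1 / 2 = c + j + 1 / 2 by ring, show c + (j + 1) - 1 = c + j by ring,
      show c + (j + 1) = c + j + 1 by ring]
    linarith
  have hgN : 0 ≤ 1 / (18 * (c + N - 1) * (c + N)) := by
    have : 0 < c + N - 1 := by linarith [N.cast_nonneg (α := ℝ)]
    positivity
  have := htele ▸ sum_le_sum hterm
  simp only [hg] at this
  linarith

lemma log_sub_log_le_div {a b : ℝ} (ha : 0 < a) (hb : 0 < b) : log a - log b ≤ (a - b) / b := by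
  rw [← log_div ha.ne' hb.ne', sub_div, div_self hb.ne']
  exact log_le_sub_one_of_pos (div_pos ha hb)

lemma le_of_forall_nat_le_add_div {a b c y : ℝ} (h : ∀ N : ℕ, a ≤ b + c / (y + N)) : a ≤ b := by
  have hlim : Tendsto (fun N : ℕ => b + c / (y + N)) atTop (𝓝 (b + 0)) :=
    tendsto_const_nhds.add (tendsto_const_nhds.div_atTop
      (tendsto_atTop_add_const_left _ y tendsto_natCast_atTop_atTop))
  rw [add_zero] at hlim
  exact ge_of_tendsto' hlim h

lemma log_sub_half_le_digamma {x : ℝ} (hx : 1 / 2 < x) : log (x - 1 / 2) ≤ digamma x := by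
  refine le_of_forall_nat_le_add_div (c := 1 / 2) (y := x) fun N => ?_
  have hxN : 0 < x + N := by linarith [N.cast_nonneg (α := ℝ)]
  have hshift := digamma_add_nat (by linarith) (N + 1)
  have hsum := sum_inv_le_log_sub_log hx (N + 1)
  have hlow := log_sub_one_le_digamma (x := x + (N + 1 : ℕ)) (by push_cast; linarith)
  have herr : log (x + N + 1 / 2) - log (x + N) ≤ 1 / 2 / (x + N) := by
    convert log_sub_log_le_div (a := x + N + 1 / 2) (by linarith) hxN using 2
    ring
  push_cast at hshift hsum hlow
  rw [show x + (N + 1) - 1 = x + N by ring] at hlow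
  rw [show x + (N + 1) - 1 / 2 = x + N + 1 / 2 by ring] at hsum
  linarith

lemma digamma_le_log_sub_half_add {x : ℝ} (hx : 1 < x) :
    digamma x ≤ log (x - 1 / 2) + 1 / (18 * (x - 1) * x) := by
  refine le_of_forall_nat_le_add_div (c := 1 / 2) (y := x - 1 / 2) fun N => ?_
  have hxN : 0 < x - 1 / 2 + N := by linarith [N.cast_nonneg (α := ℝ)]
  have hshift := digamma_add_nat (by linarith) N
  have hsum := log_sub_log_le_sum_inv hx N
  have hup := digamma_le_log (x := x + N) (by linarith)
  have herr : log (x + N) - log (x + N - 1 / 2) ≤ 1 / 2 / (x - 1 / 2 + N) := by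
    convert log_sub_log_le_div (a := x + N) (by linarith) (by linarith : 0 < x + N - 1 / 2)
      using 2 <;> ring
  linarith

lemma digamma_add_sub_digamma_le_log {x s : ℝ} (hx : 3 ≤ x) (hs : 2 ≤ s) :
    digamma (x + s) - digamma x ≤ log s := by
  have hup := digamma_le_log_sub_half_add (x := x + s) (by linarith)
  have hlow := log_sub_half_le_digamma (x := x) (by linarith)
  have hsx : 0 < s * (x - 1 / 2) := mul_pos (by linarith) (by linarith)
  have hratio : (x + s - 1 / 2) / (s * (x - 1 / 2)) ≤ 9 / 10 := by
    rw [div_le_iff₀ hsx]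
    nlinarith
  have hmain : 1 / 10 ≤ log s + log (x - 1 / 2) - log (x + s - 1 / 2) := by
    rw [← log_mul (by linarith) (by linarith), ← log_div hsx.ne' (by linarith)]
    refine le_trans ?_ (one_sub_inv_le_log_of_pos (div_pos hsx (by linarith)))
    rw [inv_div]
    linarith
  have herr : 1 / (18 * (x + s - 1) * (x + s)) ≤ 1 / 10 := by
    rw [div_le_div_iff₀ (by nlinarith) (by norm_num)]
    nlinarith
  linarith

theorem stmt_7_general (n t s k : ℝ) (ht : 1 ≤ t) (hs : 2 ≤ s)
    (r : ℤ) (hr : r = ⌈n / (s + 1)⌉)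
    (hk1 : s + 2 ≤ k) (hk2 : k ≤ (r : ℝ) + s - t - 1) :
    digamma (n + k - r) - digamma (k + 1) >
      digamma ((r : ℝ) - t - k + s + 1) - digamma (k - s + 1) := by
  have hr_lt : (r : ℝ) - 1 < n / (s + 1) := by
    rw [hr]
    linarith [Int.ceil_lt_add_one (n / (s + 1))]
  have hn : (s + 1) * ((r : ℝ) - 1) < n := by
    rwa [lt_div_iff₀ (by linarith), mul_comm] at hr_lt
  set B := (r : ℝ) - t - k + s + 1
  have hB2 : 2 ≤ B := by linarith
  have hsB : s * B < n + k - r - 1 := by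
    nlinarith [mul_nonneg (by linarith : (0 : ℝ) ≤ t - 1) (by linarith : (0 : ℝ) ≤ s),
      mul_nonneg (by linarith : (0 : ℝ) ≤ k - s - 2) (by linarith : (0 : ℝ) ≤ s)]
  have hψB := digamma_le_log (x := B) (by linarith)
  have hψA := log_sub_one_le_digamma (x := n + k - r) (by nlinarith)
  have hψk := digamma_add_sub_digamma_le_log (x := k - s + 1) (by linarith) hs
  rw [show k - s + 1 + s = k + 1 by ring] at hψk
  have hlog : log s + log B < log (n + k - r - 1) := by
    rw [← log_mul (by linarith) (by linarith)]
    exact log_lt_log (by nlinarith) hsB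
  linarith

theorem stmt_7 (n t s k : ℝ) (hn : 1 ≤ n) (ht : 1 ≤ t) (hs : 2 ≤ s)
    (r : ℤ) (hr : r = ⌈n / (s + 1)⌉)
    (hk1 : s + 2 ≤ k) (hk2 : k ≤ (r : ℝ) + s - t - 1) :
    digamma (n + k - r) - digamma (k + 1) >
      digamma ((r : ℝ) - t - k + s + 1) - digamma (k - s + 1) :=
  stmt_7_general n t s k ht hs r hr hk1 hk2
end

section
/- For all positive integers n and s with n > 3s+3 and s ≥ 2, setting r = ⌈n/(s+1)⌉, we have 2·C(n+s-r+1, s+2) ≥ C(n+s+1, s+2) - r·C(n+s, s+1) + C(r,2)·C(n+s-1, s). -/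
open Finset

/-- Hockey stick / telescoping Pascal. -/
lemma aux_hockey (m t : ℕ) : ∀ k, k ≤ m + 1 →
    (m+1).choose (t+1) = (m+1-k).choose (t+1) + ∑ i ∈ Finset.range k, (m-i).choose t := by
  intro k
  induction k with
  | zero => simp
  | succ k ih =>
    intro hk
    have hkm : k ≤ m := by omega
    rw [Finset.sum_range_succ, ih (by omega)]
    have h1 : m + 1 - k = (m - k) + 1 := by omega
    have h2 : m + 1 - (k+1) = m - k := by omega
    rw [h1, h2, Nat.choose_succ_succ]
    ring

lemma aux_ds (f : ℕ → ℕ) : ∀ r, (∑ j ∈ Finset.range r, ∑ i ∈ Finset.range j, f i)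
    = ∑ i ∈ Finset.range r, (r - 1 - i) * f i := by
  intro r
  induction r with
  | zero => simp
  | succ r ih =>
    rw [Finset.sum_range_succ, ih, Finset.sum_range_succ (f := fun i => (r + 1 - 1 - i) * f i)]
    have h0 : (r + 1 - 1 - r) * f r = 0 := by simp
    rw [h0, Nat.add_zero, ← Finset.sum_add_distrib]
    apply Finset.sum_congr rfl
    intro i hi
    rw [Finset.mem_range] at hi
    have : r + 1 - 1 - i = (r - 1 - i) + 1 := by omega
    rw [this]; ring

lemma aux_sum0 : ∀ r : ℕ, (∑ i ∈ Finset.range r, i) = r.choose 2 := by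
  intro r
  induction r with
  | zero => simp
  | succ r ih =>
    rw [Finset.sum_range_succ, ih]
    have hcs : (r+1).choose 2 = r.choose 1 + r.choose 2 := by
      rw [show (2:ℕ) = 1+1 from rfl, Nat.choose_succ_succ]
    have h1 : r.choose 1 = r := Nat.choose_one_right r
    omega

lemma aux_sum1 : ∀ r : ℕ, (∑ i ∈ Finset.range r, (r - 1 - i)) = r.choose 2 := by
  intro r
  induction r with
  | zero => simp
  | succ r ih =>
    rw [Finset.sum_range_succ]
    have h0 : r + 1 - 1 - r = 0 := by omega
    rw [h0, Nat.add_zero]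
    have h1 : (∑ i ∈ Finset.range r, (r + 1 - 1 - i))
        = ∑ i ∈ Finset.range r, ((r - 1 - i) + 1) := by
      apply Finset.sum_congr rfl
      intro i hi
      rw [Finset.mem_range] at hi
      omega
    rw [h1, Finset.sum_add_distrib, ih, Finset.sum_const, Finset.card_range]
    have hcs : (r+1).choose 2 = r.choose 1 + r.choose 2 := by
      rw [show (2:ℕ) = 1+1 from rfl, Nat.choose_succ_succ]
    have h2 : r.choose 1 = r := Nat.choose_one_right r
    simp only [smul_eq_mul, mul_one]
    omega

lemma aux_sum2 : ∀ r : ℕ, (∑ i ∈ Finset.range r, (r - 1 - i) * i) = r.choose 3 := by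
  intro r
  induction r with
  | zero => simp
  | succ r ih =>
    rw [Finset.sum_range_succ]
    have h0 : (r + 1 - 1 - r) * r = 0 := by simp
    rw [h0, Nat.add_zero]
    have h1 : (∑ i ∈ Finset.range r, (r + 1 - 1 - i) * i)
        = ∑ i ∈ Finset.range r, ((r - 1 - i) * i + i) := by
      apply Finset.sum_congr rfl
      intro i hi
      rw [Finset.mem_range] at hi
      have : r + 1 - 1 - i = (r - 1 - i) + 1 := by omega
      rw [this]; ring
    rw [h1, Finset.sum_add_distrib, ih, aux_sum0]
    have hcs : (r+1).choose 3 = r.choose 2 + r.choose 3 := by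
      rw [show (3:ℕ) = 2+1 from rfl, Nat.choose_succ_succ]
    omega

lemma aux_pow (a : ℕ) : ∀ n : ℕ, a^(n+1) + (n+1) * a^n ≤ (a+1)^(n+1) := by
  intro n
  induction n with
  | zero => simp
  | succ n ih =>
    have h1 : (a+1)^(n+2) = (a+1) * (a+1)^(n+1) := by ring
    have h2 : (a+1) * (a^(n+1) + (n+1) * a^n)
        = a^(n+2) + (n+2) * a^(n+1) + (n+1) * a^n := by ring
    calc a^(n+2) + (n+2) * a^(n+1) ≤ a^(n+2) + (n+2) * a^(n+1) + (n+1) * a^n := by omega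
      _ = (a+1) * (a^(n+1) + (n+1) * a^n) := h2.symm
      _ ≤ (a+1) * (a+1)^(n+1) := Nat.mul_le_mul_left _ ih
      _ = (a+1)^(n+2) := h1.symm

lemma aux_E (s : ℕ) (hs : 2 ≤ s) : (s+2) * (s+1)^s ≤ 6 * s^(s+1) := by
  induction s, hs using Nat.le_induction with
  | base => norm_num
  | succ s hs ih =>
    have e1 : (s*(s+2)+1)^(s+1) = (s+1)^s * (s+1)^(s+2) := by
      have h : s*(s+2)+1 = (s+1)^2 := by ring
      rw [h, ← pow_mul, ← pow_add]
      congr 1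
      omega
    have hmul : s*(s+3) ≤ s*(s+2)+(s+1) := by nlinarith
    have key : (s+3) * (s+2)^(s+1) * s^(s+1) ≤ (s+2) * (s+1)^s * (s+1)^(s+2) := by
      calc (s+3) * (s+2)^(s+1) * s^(s+1)
          = s^s * (s+2)^(s+1) * (s*(s+3)) := by ring
        _ ≤ s^s * (s+2)^(s+1) * (s*(s+2)+(s+1)) := Nat.mul_le_mul_left _ hmul
        _ = (s+2) * ((s*(s+2))^(s+1) + (s+1) * (s*(s+2))^s) := by
            rw [mul_pow, mul_pow]; ring
        _ ≤ (s+2) * ((s*(s+2)+1)^(s+1)) := Nat.mul_le_mul_left _ (aux_pow _ s)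
        _ = (s+2) * ((s+1)^s * (s+1)^(s+2)) := by rw [e1]
        _ = (s+2) * (s+1)^s * (s+1)^(s+2) := by ring
    have key2 : (s+3) * (s+2)^(s+1) * s^(s+1) ≤ 6 * (s+1)^(s+2) * s^(s+1) := by
      calc (s+3) * (s+2)^(s+1) * s^(s+1) ≤ (s+2) * (s+1)^s * (s+1)^(s+2) := key
        _ ≤ 6 * s^(s+1) * (s+1)^(s+2) := Nat.mul_le_mul_right _ ih
        _ = 6 * (s+1)^(s+2) * s^(s+1) := by ring
    exact Nat.le_of_mul_le_mul_right key2 (by positivity)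

lemma aux_descP (s c M : ℕ) : ∀ k : ℕ, (∀ i, i < k → s * (M + c - i) ≤ (s+1) * (M - i)) →
    s^k * (M + c).descFactorial k ≤ (s+1)^k * M.descFactorial k := by
  intro k
  induction k with
  | zero => simp
  | succ k ih =>
    intro h
    rw [Nat.descFactorial_succ, Nat.descFactorial_succ]
    have h1 := ih (fun i hi => h i (by omega))
    have h2 := h k (by omega)
    calc s^(k+1) * ((M + c - k) * (M+c).descFactorial k)
        = (s * (M + c - k)) * (s^k * (M+c).descFactorial k) := by ring
      _ ≤ ((s+1) * (M - k)) * ((s+1)^k * M.descFactorial k) := Nat.mul_le_mul h2 h1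
      _ = (s+1)^(k+1) * ((M - k) * M.descFactorial k) := by ring

set_option maxHeartbeats 1000000 in
lemma aux_step2 (k r M : ℕ) (hk : 1 ≤ k) (hr : 4 ≤ r) (hM : r * (k+1) + 1 ≤ M) :
    r.choose 3 * (M + (r - 3)).choose k ≤ M.choose (k+3) := by
  obtain ⟨t, rfl⟩ : ∃ t, r = t + 4 := ⟨r - 4, by omega⟩
  have hc : t + 4 - 3 = t + 1 := by omega
  rw [hc]
  -- per-factor inequality for descP
  have hper : ∀ i, i < k → (k+1) * (M + (t+1) - i) ≤ (k+2) * (M - i) := by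
    intro i hi
    have hiM : i < M := by nlinarith
    have h1 : M + (t+1) - i = (M - i) + (t+1) := by omega
    rw [h1]
    have h2 : (k+1) * (t+1) ≤ M - i := by
      have : (k+1)*(t+1) + i ≤ M := by nlinarith
      omega
    calc (k+1) * ((M - i) + (t+1)) = (k+1) * (M - i) + (k+1) * (t+1) := by ring
      _ ≤ (k+1) * (M - i) + (M - i) := Nat.add_le_add_left h2 _
      _ = (k+2) * (M - i) := by ring
  have hP := aux_descP (k+1) (t+1) M k hper
  rw [show k+1+1 = k+2 by omega] at hP
  -- lower bounds for the three big factors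
  have h3 : (k+1) * (t+3) ≤ M - (k+2) := by
    have : (k+1)*(t+3) + (k+2) ≤ M := by nlinarith
    omega
  have h4 : (k+1) * (t+3) ≤ M - (k+1) := by
    have : M - (k+2) ≤ M - (k+1) := by omega
    omega
  have h5 : (k+1) * (t+3) ≤ M - k := by
    have : M - (k+2) ≤ M - k := by omega
    omega
  -- key numeric inequality
  have hE := aux_E (k+1) (by omega)
  rw [show k+1+2 = k+3 by omega, show k+1+1 = k+2 by omega] at hE
  -- (k+3) * (k+2)^(k+1) ≤ 6 * (k+1)^(k+2)
  have hnum : (t+4) * (t+3) * (t+2) * ((k+1)*(k+2)*(k+3)) * (k+2)^k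
      ≤ 6 * ((k+1)*(t+3)) * ((k+1)*(t+3)) * ((k+1)*(t+3)) * (k+1)^k := by
    have hr2 : (t+4) * (t+2) ≤ (t+3) * (t+3) := by nlinarith
    calc (t+4) * (t+3) * (t+2) * ((k+1)*(k+2)*(k+3)) * (k+2)^k
        = ((t+4)*(t+2)) * (t+3) * (k+1) * ((k+3) * (k+2)^(k+1)) := by ring
      _ ≤ ((t+3)*(t+3)) * (t+3) * (k+1) * ((k+3) * (k+2)^(k+1)) := by
          exact Nat.mul_le_mul_right _ (Nat.mul_le_mul_right _ (Nat.mul_le_mul_right _ hr2))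
      _ ≤ ((t+3)*(t+3)) * (t+3) * (k+1) * (6 * (k+1)^(k+2)) := Nat.mul_le_mul_left _ hE
      _ = 6 * ((k+1)*(t+3)) * ((k+1)*(t+3)) * ((k+1)*(t+3)) * (k+1)^k := by ring
  -- assemble the descFactorial inequality
  have hbig : ((t+4) * (t+3) * (t+2)) * ((k+1)*(k+2)*(k+3)) * ((M + (t+1)).descFactorial k)
      * (k+1)^k ≤ 6 * (M.descFactorial (k+3)) * (k+1)^k := by
    have hD3 : M.descFactorial (k+3)
        = (M - (k+2)) * ((M - (k+1)) * ((M - k) * M.descFactorial k)) := by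
      rw [Nat.descFactorial_succ, Nat.descFactorial_succ, Nat.descFactorial_succ]
    calc ((t+4) * (t+3) * (t+2)) * ((k+1)*(k+2)*(k+3)) * ((M + (t+1)).descFactorial k) * (k+1)^k
        = ((t+4) * (t+3) * (t+2) * ((k+1)*(k+2)*(k+3))) * ((k+1)^k * (M + (t+1)).descFactorial k) := by ring
      _ ≤ ((t+4) * (t+3) * (t+2) * ((k+1)*(k+2)*(k+3))) * ((k+2)^k * M.descFactorial k) := Nat.mul_le_mul_left _ hP
      _ = ((t+4) * (t+3) * (t+2) * ((k+1)*(k+2)*(k+3)) * (k+2)^k) * M.descFactorial k := by ring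
      _ ≤ (6 * ((k+1)*(t+3)) * ((k+1)*(t+3)) * ((k+1)*(t+3)) * (k+1)^k) * M.descFactorial k := Nat.mul_le_mul_right _ hnum
      _ = (6 * (((k+1)*(t+3)) * (((k+1)*(t+3)) * (((k+1)*(t+3)) * M.descFactorial k)))) * (k+1)^k := by ring
      _ ≤ (6 * ((M - (k+2)) * ((M - (k+1)) * ((M - k) * M.descFactorial k)))) * (k+1)^k := by
          apply Nat.mul_le_mul_right
          apply Nat.mul_le_mul_left
          exact Nat.mul_le_mul h3 (Nat.mul_le_mul h4 (Nat.mul_le_mul_right _ h5))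
      _ = 6 * (M.descFactorial (k+3)) * (k+1)^k := by rw [hD3]
  have hD : ((t+4) * (t+3) * (t+2)) * ((k+1)*(k+2)*(k+3)) * ((M + (t+1)).descFactorial k)
      ≤ 6 * (M.descFactorial (k+3)) := Nat.le_of_mul_le_mul_right hbig (by positivity)
  -- convert to choose
  have c1 : (M + (t+1)).descFactorial k = k.factorial * (M + (t+1)).choose k :=
    Nat.descFactorial_eq_factorial_mul_choose _ _
  have c2 : M.descFactorial (k+3) = (k+3).factorial * M.choose (k+3) :=
    Nat.descFactorial_eq_factorial_mul_choose _ _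
  have c3 : (k+3).factorial = k.factorial * ((k+1)*(k+2)*(k+3)) := by
    rw [show k+3 = (k+2)+1 from rfl, Nat.factorial_succ,
      show k+2 = (k+1)+1 from rfl, Nat.factorial_succ, Nat.factorial_succ]
    ring
  rw [c1, c2, c3] at hD
  have hd : (t+4).descFactorial 3 = (t+2)*((t+3)*((t+4)*1)) := by
    rw [Nat.descFactorial_succ, Nat.descFactorial_succ, Nat.descFactorial_succ,
      Nat.descFactorial_zero]
    rw [show t+4-2 = t+2 by omega, show t+4-1 = t+3 by omega, show t+4-0 = t+4 by omega]
  have cr : 6 * (t+4).choose 3 = (t+4)*(t+3)*(t+2) := by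
    have h := Nat.descFactorial_eq_factorial_mul_choose (t+4) 3
    rw [hd] at h
    have h6 : Nat.factorial 3 = 6 := by norm_num [Nat.factorial]
    rw [h6] at h
    rw [← h]; ring
  have hfin : (6*k.factorial*((k+1)*(k+2)*(k+3))) * ((t+4).choose 3 * (M+(t+1)).choose k)
      ≤ (6*k.factorial*((k+1)*(k+2)*(k+3))) * M.choose (k+3) := by
    calc (6*k.factorial*((k+1)*(k+2)*(k+3))) * ((t+4).choose 3 * (M+(t+1)).choose k)
        = ((6 * (t+4).choose 3) * ((k+1)*(k+2)*(k+3))) * (k.factorial * (M+(t+1)).choose k) := by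
          ring
      _ = ((t+4)*(t+3)*(t+2)) * ((k+1)*(k+2)*(k+3)) * (k.factorial * (M+(t+1)).choose k) := by
          rw [cr]
      _ ≤ 6 * (k.factorial * ((k+1)*(k+2)*(k+3)) * M.choose (k+3)) := hD
      _ = (6*k.factorial*((k+1)*(k+2)*(k+3))) * M.choose (k+3) := by ring
  exact Nat.le_of_mul_le_mul_left hfin (by positivity)

theorem stmt_12 (n s : ℕ) (hn : 3 * s + 3 < n) (hs : 2 ≤ s)
    (r : ℕ) (hr : r = (n + s) / (s + 1)) :
    (2 : ℤ) * (n + s - r + 1).choose (s + 2) ≥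
      ((n + s + 1).choose (s + 2) : ℤ) - r * (n + s).choose (s + 1) +
        r.choose 2 * (n + s - 1).choose s := by
  set N := n + s with hN
  have hrm : r * (s+1) ≤ N := by rw [hr]; exact Nat.div_mul_le_self _ _
  have hr4 : 4 ≤ r := by
    rw [hr, Nat.le_div_iff_mul_le (by omega : 0 < s + 1)]
    omega
  have hrN : r ≤ N := by
    calc r = r * 1 := by ring
      _ ≤ r * (s+1) := Nat.mul_le_mul_left r (by omega)
      _ ≤ N := hrm
  have hNs : 4 * s + 4 ≤ N := by omega
  -- decomposition of (N+1).choose (s+2)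
  have hT : (N+1).choose (s+2)
      = (N+1-r).choose (s+2) + ∑ i ∈ Finset.range r, (N-i).choose (s+1) := by
    have := aux_hockey N (s+1) r (by omega)
    rwa [show s+1+1 = s+2 by omega] at this
  -- decomposition of N.choose (s+1)
  have hBj : ∀ j, j < r → N.choose (s+1)
      = (N-j).choose (s+1) + ∑ i ∈ Finset.range j, (N-1-i).choose s := by
    intro j hj
    have h := aux_hockey (N-1) s j (by omega)
    rwa [show N-1+1 = N by omega] at h
  have hrB : r * N.choose (s+1)
      = (∑ i ∈ Finset.range r, (N-i).choose (s+1))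
        + ∑ i ∈ Finset.range r, (r - 1 - i) * (N-1-i).choose s := by
    have h1 : r * N.choose (s+1) = ∑ _j ∈ Finset.range r, N.choose (s+1) := by
      rw [Finset.sum_const, Finset.card_range, smul_eq_mul]
    rw [h1]
    rw [Finset.sum_congr rfl (fun j hj => hBj j (Finset.mem_range.mp hj)),
      Finset.sum_add_distrib, aux_ds]
  -- upper bound for r.choose 2 * (N-1).choose s
  have hPC : r.choose 2 * (N-1).choose s
      ≤ (∑ i ∈ Finset.range r, (r - 1 - i) * (N-1-i).choose s)
        + r.choose 3 * (N-2).choose (s-1) := by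
    have h1 : r.choose 2 * (N-1).choose s
        = ∑ i ∈ Finset.range r, (r - 1 - i) * (N-1).choose s := by
      rw [← Finset.sum_mul, aux_sum1]
    rw [h1]
    have h2 : ∀ i ∈ Finset.range r, (r-1-i) * (N-1).choose s
        ≤ (r-1-i) * (N-1-i).choose s + ((r-1-i)*i) * (N-2).choose (s-1) := by
      intro i hi
      rw [Finset.mem_range] at hi
      have key : (N-1).choose s ≤ (N-1-i).choose s + i * (N-2).choose (s-1) := by
        have hh := aux_hockey (N-2) (s-1) i (by omega)
        rw [show N-2+1 = N-1 by omega, show s-1+1 = s by omega] at hh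
        have hb : (∑ l ∈ Finset.range i, (N-2-l).choose (s-1))
            ≤ i * (N-2).choose (s-1) := by
          calc (∑ l ∈ Finset.range i, (N-2-l).choose (s-1))
              ≤ ∑ _l ∈ Finset.range i, (N-2).choose (s-1) :=
                Finset.sum_le_sum (fun l _ => Nat.choose_le_choose _ (by omega))
            _ = i * (N-2).choose (s-1) := by
                rw [Finset.sum_const, Finset.card_range, smul_eq_mul]
        rw [hh]
        exact Nat.add_le_add_left hb _
      calc (r-1-i) * (N-1).choose s
          ≤ (r-1-i) * ((N-1-i).choose s + i * (N-2).choose (s-1)) :=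
            Nat.mul_le_mul_left _ key
        _ = (r-1-i) * (N-1-i).choose s + ((r-1-i)*i) * (N-2).choose (s-1) := by ring
    calc (∑ i ∈ Finset.range r, (r - 1 - i) * (N-1).choose s)
        ≤ ∑ i ∈ Finset.range r,
            ((r-1-i) * (N-1-i).choose s + ((r-1-i)*i) * (N-2).choose (s-1)) :=
          Finset.sum_le_sum h2
      _ = (∑ i ∈ Finset.range r, (r - 1 - i) * (N-1-i).choose s)
          + (∑ i ∈ Finset.range r, (r-1-i)*i) * (N-2).choose (s-1) := by
          rw [Finset.sum_add_distrib, Finset.sum_mul]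
      _ = (∑ i ∈ Finset.range r, (r - 1 - i) * (N-1-i).choose s)
          + r.choose 3 * (N-2).choose (s-1) := by rw [aux_sum2]
  -- core bound
  have hA : r.choose 3 * (N-2).choose (s-1) ≤ (N+1-r).choose (s+2) := by
    have hMb : r * ((s-1)+1) + 1 ≤ N + 1 - r := by
      have : r * ((s-1)+1) + r ≤ r * (s+1) := by
        have : (s-1)+1+1 ≤ s+1 := by omega
        calc r * ((s-1)+1) + r = r * ((s-1)+1+1) := by ring
          _ ≤ r * (s+1) := Nat.mul_le_mul_left r (by omega)
      omega
    have h := aux_step2 (s-1) r (N+1-r) (by omega) hr4 hMb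
    rwa [show (N+1-r) + (r-3) = N-2 by omega, show s-1+3 = s+2 by omega] at h
  -- assemble in ℕ
  have main : (N+1).choose (s+2) + r.choose 2 * (N-1).choose s
      ≤ 2 * (N+1-r).choose (s+2) + r * N.choose (s+1) := by
    rw [hT, hrB]
    linarith [hPC, hA]
  have main' : (((N+1).choose (s+2) : ℤ)) + (r.choose 2 : ℤ) * ((N-1).choose s : ℤ)
      ≤ 2 * ((N+1-r).choose (s+2) : ℤ) + (r : ℤ) * ((N).choose (s+1) : ℤ) := by
    exact_mod_cast main
  have e : N - r + 1 = N + 1 - r := by omega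
  rw [e]
  linarith
end

section
/- Let n, s be positive integers with s ≥ 2, let r = ⌈n/(s+1)⌉, and write n = r(s+1) - n₀ with 0 ≤ n₀ ≤ s. Then (r-1)·C(r,2)·(s+1)(s+2) ≥ (n+s)·(n - 1 - (r-1)(n+s+1) + r(r-1)(s+2)), provided r ≥ 4. -/
theorem stmt_13 (n s r n₀ : ℕ) (hn : 0 < n) (hs : 2 ≤ s)
    (hr : r = (n + s) / (s + 1)) (hn₀ : n₀ ≤ s) (hrel : (n : ℤ) = r * (s + 1) - n₀)
    (hr4 : 4 ≤ r) :
    ((r : ℤ) - 1) * r.choose 2 * (s + 1) * (s + 2) ≥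
      ((n : ℤ) + s) * ((n : ℤ) - 1 - (r - 1) * (n + s + 1) + r * (r - 1) * (s + 2)) := by
  have hch : (2 : ℤ) * r.choose 2 = r * (r - 1) := by
    have h2 : 2 * r.choose 2 = r * (r - 1) := by
      rw [Nat.choose_two_right, Nat.mul_div_cancel']
      exact r.even_mul_pred_self.two_dvd
    have := congrArg (Nat.cast : ℕ → ℤ) h2
    push_cast [Nat.cast_sub (by omega : 1 ≤ r)] at this
    linarith
  have hR : (4 : ℤ) ≤ r := by exact_mod_cast hr4
  have hS : (2 : ℤ) ≤ s := by exact_mod_cast hs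
  have hN0 : (n₀ : ℤ) ≤ s := by exact_mod_cast hn₀
  set A : ℤ := (r : ℤ) - 4 with hAdef
  set B : ℤ := (s : ℤ) - 2 with hBdef
  set C : ℤ := (s : ℤ) - n₀ with hCdef
  have hA : (0 : ℤ) ≤ A := by omega
  have hB : (0 : ℤ) ≤ B := by omega
  have hC : (0 : ℤ) ≤ C := by omega
  have key : ((r : ℤ) - 1) * (2 * r.choose 2) * (s + 1) * (s + 2) -
      2 * (((n : ℤ) + s) * ((n : ℤ) - 1 - (r - 1) * (n + s + 1) + r * (r - 1) * (s + 2))) =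
      12 * C + 4 * C^2 + 36 * B + 10 * B * C + 12 * B^2 + 72 * A + 18 * A * C + 2 * A * C^2 +
      81 * A * B + 10 * A * B * C + 19 * A * B^2 + 42 * A^2 + 4 * A^2 * C + 38 * A^2 * B +
      2 * A^2 * B * C + 6 * A^3 + 5 * A^3 * B + 8 * A^2 * B^2 + 1 * A^3 * B^2 := by
    rw [hch, hrel, hAdef, hBdef, hCdef]
    ring
  linarith [key, mul_nonneg hC hC, mul_nonneg hB hC, mul_nonneg hB hB, mul_nonneg hA hC,
    mul_nonneg (mul_nonneg hA hC) hC, mul_nonneg hA hB, mul_nonneg (mul_nonneg hA hB) hC,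
    mul_nonneg (mul_nonneg hA hB) hB, mul_nonneg hA hA, mul_nonneg (mul_nonneg hA hA) hC,
    mul_nonneg (mul_nonneg hA hA) hB, mul_nonneg (mul_nonneg (mul_nonneg hA hA) hB) hC,
    mul_nonneg (mul_nonneg hA hA) hA, mul_nonneg (mul_nonneg (mul_nonneg hA hA) hA) hB,
    mul_nonneg (mul_nonneg (mul_nonneg hA hA) hB) hB,
    mul_nonneg (mul_nonneg (mul_nonneg (mul_nonneg hA hA) hA) hB) hB]
end

section
/- Let n, s, r be positive integers with s ≥ 2 and r = ⌈n/(s+1)⌉, and suppose n = ℓ(s+1) - n₀ for some integers ℓ = r and 0 ≤ n₀ ≤ s, with r ≥ 4. Then 2·N(n,s) + ((r-2)s+1)·s ≥ (n-r+1)·(2n+2s+1-r(s+2)), where N(n,s) = (n+s)(n+s+1) - r(n+s)(s+2) + C(r,2)(s+1)(s+2). -/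
theorem stmt_16 (n s r n₀ : ℕ) (hn : 0 < n) (hs : 2 ≤ s) (hr0 : 0 < r)
    (hr : r = (n + s) / (s + 1)) (hn₀ : n₀ ≤ s) (hrel : (n : ℤ) = r * (s + 1) - n₀)
    (hr4 : 4 ≤ r) :
    2 * (((n : ℤ) + s) * (n + s + 1) - r * (n + s) * (s + 2) +
          r.choose 2 * (s + 1) * (s + 2)) +
        ((r - 2) * s + 1) * s ≥
      ((n : ℤ) - r + 1) * (2 * n + 2 * s + 1 - r * (s + 2)) := by
  have hd : 2 ∣ r * (r - 1) := by
    rcases Nat.even_or_odd r with h | h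
    · exact h.two_dvd.mul_right _
    · exact ((Nat.Odd.sub_odd h odd_one).two_dvd).mul_left _
  have h2n : 2 * r.choose 2 = r * (r - 1) := by
    rw [Nat.choose_two_right, Nat.mul_div_cancel' hd]
  have h2 : 2 * (r.choose 2 : ℤ) = r * (r - 1) := by
    have := congrArg (Nat.cast : ℕ → ℤ) h2n
    push_cast [Nat.cast_sub (by omega : 1 ≤ r)] at this
    linarith
  have hs' : (2:ℤ) ≤ s := by exact_mod_cast hs
  have hr4' : (4:ℤ) ≤ r := by exact_mod_cast hr4
  have hn0' : (0:ℤ) ≤ n₀ := by positivity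
  rw [ge_iff_le, ← sub_nonneg]
  have key : 2 * (((n : ℤ) + s) * (n + s + 1) - r * (n + s) * (s + 2) +
          r.choose 2 * (s + 1) * (s + 2)) +
        ((r - 2) * s + 1) * s -
      ((n : ℤ) - r + 1) * (2 * n + 2 * s + 1 - r * (s + 2)) =
      (s:ℤ) * (r * r - 3 * r + 1) + n₀ * ((r - 2) * s + 1) - 1 := by
    rw [hrel]
    linear_combination ((s:ℤ) + 1) * (s + 2) * h2
  rw [key]
  have h1 : (0:ℤ) ≤ (s:ℤ) * ((r:ℤ) * r - 3 * r + 1) := by nlinarith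
  have h3 : (0:ℤ) ≤ (n₀:ℤ) * (((r:ℤ) - 2) * s + 1) := by
    apply mul_nonneg hn0'; nlinarith
  nlinarith
end

section
/- For all positive integers n, the largest integer p such that (1-T)^p · ∑_{k≥1} C(n+k-1,k) T^k has all nonnegative coefficients equals ⌈n/2⌉. -/
/-!
The series is `(1 - T)⁻ⁿ - 1`. Splitting `n = d + p`, multiplication by `(1 - T)ᵖ` gives
`(1 - T)⁻ᵈ - (1 - T)ᵖ`, whose `k`-th coefficient is `C(d + k - 1, k) - (-1)ᵏ C(p, k)`; for
`p ≤ d + 1` this is nonnegative, since for even `k ≥ 2` we have `C(p, k) ≤ C(d + k - 1, k)`.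
With `p = ⌈n/2⌉`, `d = ⌊n/2⌋` this applies. Conversely, the coefficient of `T²` is always
`C(n + 1, 2) - p n`, which is negative as soon as `2p > n + 1`.
-/

namespace PowerSeries

variable {R : Type*} [CommRing R]

theorem coeff_one_sub_X_pow_s19 (p k : ℕ) :
    coeff k ((1 - X : R⟦X⟧) ^ p) = (-1) ^ k * p.choose k := by
  have h : (1 - X : R⟦X⟧) ^ p = rescale (-1) ((1 + Polynomial.X : Polynomial R) ^ p : R⟦X⟧) := by
    simp [sub_eq_add_neg]
  rw [h, coeff_rescale, ← Polynomial.coe_pow, Polynomial.coeff_coe, Polynomial.coeff_one_add_X_pow]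

/-- At `d = 0` the truncated subtraction `d + k - 1` makes the right side `1` for `k = 0` and
`0` otherwise. -/
theorem coeff_invOneSubPow (d k : ℕ) :
    coeff k (invOneSubPow R d : R⟦X⟧) = (d + k - 1).choose k := by
  cases d with
  | zero => cases k <;> simp [invOneSubPow_zero, coeff_one]
  | succ d => simp [invOneSubPow_val_succ_eq_mk_add_choose, Nat.choose_symm_add]

theorem mk_choose_eq_invOneSubPow_sub_one (n : ℕ) :
    (mk fun j => if 1 ≤ j then ((n + j - 1).choose j : R) else 0) =
      (invOneSubPow R n : R⟦X⟧) - 1 := by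
  ext j
  rw [coeff_mk, map_sub, coeff_invOneSubPow, coeff_one]
  rcases j with _ | j <;> simp

theorem one_sub_pow_mul_invOneSubPow_sub_one (d p : ℕ) :
    (1 - X : R⟦X⟧) ^ p * ((invOneSubPow R (d + p) : R⟦X⟧) - 1) =
      (invOneSubPow R d : R⟦X⟧) - (1 - X) ^ p := by
  rw [mul_sub, mul_one, one_sub_pow_mul_invOneSubPow_val_add_eq_invOneSubPow_val]

theorem coeff_two_one_sub_pow_mul_invOneSubPow_sub_one (n p : ℕ) :
    coeff 2 ((1 - X : R⟦X⟧) ^ p * ((invOneSubPow R n : R⟦X⟧) - 1)) =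
      ((n + 1).choose 2 - p * n : R) := by
  simp [coeff_mul, Finset.Nat.antidiagonal_succ, coeff_one_sub_X_pow_s19, coeff_invOneSubPow, coeff_one]
  ring

theorem coeff_invOneSubPow_sub_one_sub_pow_nonneg [LinearOrder R] [IsStrictOrderedRing R] {d p : ℕ} (hp : p ≤ d + 1) (k : ℕ) :
    0 ≤ coeff k ((invOneSubPow R d : R⟦X⟧) - (1 - X) ^ p) := by
  rw [map_sub, coeff_invOneSubPow, coeff_one_sub_X_pow_s19, sub_nonneg]
  rcases k with _ | _ | k
  · simp
  · simpa using (neg_nonpos.2 (Nat.cast_nonneg (α := R) p)).trans (Nat.cast_nonneg d)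
  · calc (-1) ^ (k + 2) * (p.choose (k + 2) : R) ≤ p.choose (k + 2) := by
          rcases neg_one_pow_eq_or R (k + 2) with h | h <;> rw [h] <;> simp
      _ ≤ (d + (k + 2) - 1).choose (k + 2) := by
          exact_mod_cast Nat.choose_le_choose _ (by omega)

end PowerSeries

open PowerSeries

theorem stmt_19 (n : ℕ) (hn : 0 < n) :
    IsGreatest
      {p : ℕ | ∀ k : ℕ, 0 ≤ (PowerSeries.coeff (R := ℤ) k)
        ((1 - PowerSeries.X) ^ p *
          PowerSeries.mk fun j => if 1 ≤ j then ((n + j - 1).choose j : ℤ) else 0)}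
      ((n + 1) / 2) := by
  simp only [mk_choose_eq_invOneSubPow_sub_one]
  refine ⟨fun k => ?_, fun p hp => ?_⟩
  · have hsplit := one_sub_pow_mul_invOneSubPow_sub_one (R := ℤ) (n / 2) ((n + 1) / 2)
    rw [show n / 2 + (n + 1) / 2 = n by omega] at hsplit
    rw [hsplit]
    exact coeff_invOneSubPow_sub_one_sub_pow_nonneg (by omega) k
  · have hcoeff2 := hp 2
    rw [coeff_two_one_sub_pow_mul_invOneSubPow_sub_one, sub_nonneg] at hcoeff2
    have hpn : p * n * 2 ≤ (n + 1) * n := by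
      have hchoose := n.add_one_mul_choose_eq 1
      rw [n.choose_one_right] at hchoose
      rw [hchoose]
      exact Nat.mul_le_mul_right 2 (by exact_mod_cast hcoeff2)
    rw [Nat.le_div_iff_mul_le two_pos]
    exact Nat.le_of_mul_le_mul_right (by linarith) hn
end
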